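/- arXiv:1709.01402 — 5 statements merged into one kernel-verified Lean document; each statement's English description precedes it below -/
import Mathlib

section
/- Let h be a flow with demands d on an oriented weighted graph G satisfying the capacity constraints 0 ≤ h[e] ≤ W_e for all oriented edges e. Then for any graph signal x : V → ℝ, |Σ_{i∈V} d[i] · x[i]| ≤ ‖x‖_TV, where ‖x‖_TV = Σ_{e∈E} W_e |x[e⁺] − x[e⁻]|. -/
open Finset

/-- Weighted total variation of a graph signal `x` restricted to an edge set `S`.
Edges are represented as ordered pairs (each undirected edge listed once with an
arbitrary orientation; the absolute difference is orientation-independent). -/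
def TVon {V : Type*} (W : V × V → ℝ) (S : Finset (V × V)) (x : V → ℝ) : ℝ :=
  ∑ e ∈ S, W e * |x e.2 - x e.1|

/-- Net inflow of a flow `h` on the oriented edge set `E` at node `i`
(inflow minus outflow). -/
def netflow {V : Type*} [DecidableEq V] (E : Finset (V × V)) (h : V × V → ℝ) (i : V) : ℝ :=
  ∑ e ∈ E.filter (fun e => e.2 = i), h e - ∑ e ∈ E.filter (fun e => e.1 = i), h e

/-- Re-orient an edge according to the orientation choice `σ`. -/
def oflip {V : Type*} (σ : V × V → Bool) (e : V × V) : V × V := if σ e then e else e.swap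

/-- Net inflow at node `i` of the flow `h` on the edge set `E` re-oriented by `σ`. -/
def demandOf {V : Type*} [DecidableEq V] (E : Finset (V × V)) (σ : V × V → Bool)
    (h : V × V → ℝ) (i : V) : ℝ :=
  ∑ e ∈ E, (if (oflip σ e).2 = i then h e else 0)
    - ∑ e ∈ E, (if (oflip σ e).1 = i then h e else 0)

/-- The network compatibility condition (NCC) for edge set `E`, boundary edges `B`,
weights `W`, sampling set `M` and parameters `K, L`: for any orientation of the
boundary edges, the remaining edges can be oriented such that there exists a
nonnegative flow `h` with `h = L·W` on the boundary, capacity `h ≤ W` off the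
boundary, whose demands vanish off `M` and are bounded by `K` on `M`. -/
def NCC {V : Type*} [DecidableEq V] (E B : Finset (V × V)) (W : V × V → ℝ)
    (M : Finset V) (K L : ℝ) : Prop :=
  ∀ σb : V × V → Bool, ∃ σ : V × V → Bool, (∀ e ∈ B, σ e = σb e) ∧
    ∃ h : V × V → ℝ,
      (∀ e ∈ E, 0 ≤ h e) ∧
      (∀ e ∈ B, h e = L * W e) ∧
      (∀ e ∈ E, e ∉ B → h e ≤ W e) ∧
      (∀ i ∈ M, |demandOf E σ h i| ≤ K) ∧
      (∀ i, i ∉ M → demandOf E σ h i = 0)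

/-- Adjacency relation of the (undirected) edge set `E`. -/
def Adj {V : Type*} (E : Finset (V × V)) (i j : V) : Prop := (i, j) ∈ E ∨ (j, i) ∈ E

/-- Reachability (same connected component) in the graph with edge set `E`. -/
def Reach {V : Type*} (E : Finset (V × V)) : V → V → Prop := Relation.ReflTransGen (Adj E)

/-- for a flow with demands `d` obeying the capacity constraints
`0 ≤ h ≤ W`, the pairing of the demands with any graph signal is bounded by the
signal's total variation. -/
theorem flow_duality_bound {V : Type*} [Fintype V] [DecidableEq V]
    (E : Finset (V × V)) (W : V × V → ℝ) (hW : ∀ e ∈ E, 0 < W e)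
    (h : V × V → ℝ) (d : V → ℝ)
    (hcons : ∀ i : V, netflow E h i = d i)
    (hpos : ∀ e ∈ E, 0 ≤ h e) (hcap : ∀ e ∈ E, h e ≤ W e)
    (x : V → ℝ) :
    |∑ i : V, d i * x i| ≤ TVon W E x := by
  have key : ∑ i : V, d i * x i = ∑ e ∈ E, h e * (x e.2 - x e.1) := by
    have h2 : ∀ i : V, d i * x i =
        (∑ e ∈ E.filter (fun e => e.2 = i), h e * x e.2)
        - (∑ e ∈ E.filter (fun e => e.1 = i), h e * x e.1) := by
      intro i
      rw [← hcons i, netflow, sub_mul, Finset.sum_mul, Finset.sum_mul]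
      congr 1
      · exact Finset.sum_congr rfl fun e he => by
          rw [(Finset.mem_filter.mp he).2]
      · exact Finset.sum_congr rfl fun e he => by
          rw [(Finset.mem_filter.mp he).2]
    simp only [h2]
    rw [Finset.sum_sub_distrib]
    have hA : ∑ i : V, ∑ e ∈ E.filter (fun e => e.2 = i), h e * x e.2
        = ∑ e ∈ E, h e * x e.2 :=
      Finset.sum_fiberwise_of_maps_to (fun e _ => Finset.mem_univ _) _
    have hB : ∑ i : V, ∑ e ∈ E.filter (fun e => e.1 = i), h e * x e.1
        = ∑ e ∈ E, h e * x e.1 :=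
      Finset.sum_fiberwise_of_maps_to (fun e _ => Finset.mem_univ _) _
    rw [hA, hB, ← Finset.sum_sub_distrib]
    exact Finset.sum_congr rfl fun e _ => by ring
  rw [key, TVon]
  calc |∑ e ∈ E, h e * (x e.2 - x e.1)| ≤ ∑ e ∈ E, |h e * (x e.2 - x e.1)| :=
        Finset.abs_sum_le_sum_abs _ _
    _ ≤ ∑ e ∈ E, W e * |x e.2 - x e.1| := by
        refine Finset.sum_le_sum fun e he => ?_
        rw [abs_mul, abs_of_nonneg (hpos e he)]
        exact mul_le_mul_of_nonneg_right (hcap e he) (abs_nonneg _)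
end

section
/- Let h be a flow with demands d on an oriented weighted graph G such that h[e] = L·W_e for every boundary edge e ∈ ∂F (with L > 0), h satisfies capacity h[e] ≤ W_e on E ∖ ∂F, and d[i] = 0 for i ∉ M. Then for any graph signal z : V → ℝ whose orientation of boundary edges is chosen so that z[e⁺] − z[e⁻] = |z[e⁺] − z[e⁻]| on ∂F, one has L·‖z‖_{∂F} ≤ ‖z‖_{E∖∂F} + Σ_{i∈M} d[i]·z[i]. -/
open Finset

/-- a flow saturating the boundary at level `L·W`, obeying capacities
off the boundary and with demands supported on `M`, yields the key inequality
`L·‖z‖_B ≤ ‖z‖_{E∖B} + Σ_{i∈M} d[i]·z[i]` for signals `z` whose differences on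
boundary edges are aligned with the orientation. -/
theorem ncc_flow_inequality {V : Type*} [Fintype V] [DecidableEq V]
    (E B : Finset (V × V)) (hB : B ⊆ E) (W : V × V → ℝ) (hW : ∀ e ∈ E, 0 < W e)
    (M : Finset V) (L : ℝ) (hL : 0 < L)
    (h : V × V → ℝ) (d : V → ℝ)
    (hcons : ∀ i : V, netflow E h i = d i)
    (hpos : ∀ e ∈ E, 0 ≤ h e)
    (hsat : ∀ e ∈ B, h e = L * W e)
    (hcap : ∀ e ∈ E, e ∉ B → h e ≤ W e)
    (hd0 : ∀ i : V, i ∉ M → d i = 0)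
    (z : V → ℝ) (hz : ∀ e ∈ B, z e.2 - z e.1 = |z e.2 - z e.1|) :
    L * TVon W B z ≤ TVon W (E \ B) z + ∑ i ∈ M, d i * z i := by
  -- summation by parts
  have key : ∑ i, d i * z i = ∑ e ∈ E, h e * (z e.2 - z e.1) := by
    have h1 : ∀ i : V, d i * z i
        = (∑ e ∈ E, if e.2 = i then h e * z i else 0)
          - (∑ e ∈ E, if e.1 = i then h e * z i else 0) := by
      intro i
      rw [← hcons i, netflow, sub_mul, Finset.sum_filter, Finset.sum_filter,
        Finset.sum_mul, Finset.sum_mul]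
      congr 1 <;> exact Finset.sum_congr rfl (fun e _ => by split <;> simp)
    calc ∑ i, d i * z i
        = ∑ i, ((∑ e ∈ E, if e.2 = i then h e * z i else 0)
            - (∑ e ∈ E, if e.1 = i then h e * z i else 0)) :=
          Finset.sum_congr rfl (fun i _ => h1 i)
      _ = (∑ i, ∑ e ∈ E, if e.2 = i then h e * z i else 0)
            - (∑ i, ∑ e ∈ E, if e.1 = i then h e * z i else 0) := by
          rw [Finset.sum_sub_distrib]
      _ = (∑ e ∈ E, ∑ i, if e.2 = i then h e * z i else 0)
            - (∑ e ∈ E, ∑ i, if e.1 = i then h e * z i else 0) := by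
          congr 1 <;> exact Finset.sum_comm
      _ = (∑ e ∈ E, h e * z e.2) - (∑ e ∈ E, h e * z e.1) := by
          congr 1 <;> exact Finset.sum_congr rfl (fun e _ => by simp)
      _ = ∑ e ∈ E, h e * (z e.2 - z e.1) := by
          rw [← Finset.sum_sub_distrib]
          exact Finset.sum_congr rfl (fun e _ => by ring)
  have hsum : ∑ i ∈ M, d i * z i = ∑ i, d i * z i := by
    refine Finset.sum_subset (Finset.subset_univ M) ?_
    intro i _ hi
    simp [hd0 i hi]
  have hsplit : ∑ e ∈ E, h e * (z e.2 - z e.1)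
      = ∑ e ∈ B, h e * (z e.2 - z e.1) + ∑ e ∈ E \ B, h e * (z e.2 - z e.1) := by
    rw [add_comm, Finset.sum_sdiff hB]
  have hBsum : ∑ e ∈ B, h e * (z e.2 - z e.1) = L * TVon W B z := by
    rw [TVon, Finset.mul_sum]
    refine Finset.sum_congr rfl (fun e he => ?_)
    rw [hsat e he, ← hz e he]; ring
  have hEB : -(TVon W (E \ B) z) ≤ ∑ e ∈ E \ B, h e * (z e.2 - z e.1) := by
    rw [TVon, ← Finset.sum_neg_distrib]
    refine Finset.sum_le_sum (fun e he => ?_)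
    have heE : e ∈ E := (Finset.mem_sdiff.mp he).1
    have heB : e ∉ B := (Finset.mem_sdiff.mp he).2
    have h1 : |h e * (z e.2 - z e.1)| ≤ W e * |z e.2 - z e.1| := by
      rw [abs_mul, abs_of_nonneg (hpos e heE)]
      exact mul_le_mul_of_nonneg_right (hcap e heE heB) (abs_nonneg _)
    linarith [neg_abs_le (h e * (z e.2 - z e.1))]
  have := hsplit ▸ key
  linarith
end

section
/- Suppose the sampling set M and partition F satisfy the network compatibility condition with parameters K, L > 1: for any orientation of the boundary edges ∂F there is an orientation of the remaining edges and a flow h with demands d such that h[e] = L·W_e on ∂F, |d[i]| ≤ K for i ∈ M, and d[i] = 0 for i ∉ M. Then every graph signal z : V → ℝ with z[i] = 0 for all i ∈ M satisfies L·‖z‖_{∂F} ≤ ‖z‖_{E∖∂F}. -/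
open Finset

/-- under the NCC with parameters `K, L > 1`, every signal vanishing
on the sampling set satisfies `L·‖z‖_B ≤ ‖z‖_{E∖B}`. -/
theorem ncc_nullspace_property {V : Type*} [Fintype V] [DecidableEq V]
    (E B : Finset (V × V)) (hB : B ⊆ E) (W : V × V → ℝ) (hW : ∀ e ∈ E, 0 < W e)
    (M : Finset V) (K L : ℝ) (hK : 1 < K) (hL : 1 < L)
    (hNCC : NCC E B W M K L)
    (z : V → ℝ) (hzM : ∀ i ∈ M, z i = 0) :
    L * TVon W B z ≤ TVon W (E \ B) z := by
  classical
  obtain ⟨σ, hσb, h, hpos, hBval, hcap, _, hdem0⟩ :=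
    hNCC (fun e => decide (z e.1 ≤ z e.2))
  -- key identity: ∑ e ∈ E, h e * (z (oflip σ e).2 - z (oflip σ e).1) = ∑ i, z i * demand i
  have key : ∑ e ∈ E, h e * (z (oflip σ e).2 - z (oflip σ e).1)
      = ∑ i, z i * demandOf E σ h i := by
    have expand : ∀ i : V, z i * demandOf E σ h i
        = ∑ e ∈ E, (z i * (if (oflip σ e).2 = i then h e else 0)
          - z i * (if (oflip σ e).1 = i then h e else 0)) := fun i => by
      simp [demandOf, mul_sub, Finset.mul_sum, Finset.sum_sub_distrib]
    rw [Finset.sum_congr rfl (fun i _ => expand i), Finset.sum_comm]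
    refine Finset.sum_congr rfl fun e _ => ?_
    rw [Finset.sum_sub_distrib]
    have h2 : ∑ i : V, z i * (if (oflip σ e).2 = i then h e else 0)
        = z (oflip σ e).2 * h e := by
      simp [mul_ite, mul_zero]
    have h1 : ∑ i : V, z i * (if (oflip σ e).1 = i then h e else 0)
        = z (oflip σ e).1 * h e := by
      simp [mul_ite, mul_zero]
    rw [h1, h2]; ring
  have hzero : ∑ i, z i * demandOf E σ h i = 0 := by
    refine Finset.sum_eq_zero fun i _ => ?_
    by_cases hi : i ∈ M
    · rw [hzM i hi, zero_mul]
    · rw [hdem0 i hi, mul_zero]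
  -- absolute difference is orientation-independent
  have habs : ∀ e : V × V, |z (oflip σ e).2 - z (oflip σ e).1| = |z e.2 - z e.1| := by
    intro e
    unfold oflip
    by_cases hs : σ e <;> simp [hs, Prod.swap, abs_sub_comm]
  -- on the boundary, the oriented difference equals the absolute difference
  have hBdiff : ∀ e ∈ B, z (oflip σ e).2 - z (oflip σ e).1 = |z e.2 - z e.1| := by
    intro e he
    have hσe := hσb e he
    unfold oflip
    rw [hσe]
    by_cases hle : z e.1 ≤ z e.2
    · simp [hle, abs_of_nonneg (sub_nonneg.mpr hle)]
    · rw [abs_of_nonpos (sub_nonpos.mpr (le_of_not_ge hle))]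
      simp [hle, Prod.swap]
  have hsplit : ∑ e ∈ E, h e * (z (oflip σ e).2 - z (oflip σ e).1)
      = ∑ e ∈ B, h e * (z (oflip σ e).2 - z (oflip σ e).1)
        + ∑ e ∈ E \ B, h e * (z (oflip σ e).2 - z (oflip σ e).1) := by
    rw [← Finset.sum_union (Finset.disjoint_sdiff), Finset.union_sdiff_of_subset hB]
  have hBsum : ∑ e ∈ B, h e * (z (oflip σ e).2 - z (oflip σ e).1) = L * TVon W B z := by
    rw [TVon, Finset.mul_sum]
    refine Finset.sum_congr rfl fun e he => ?_
    rw [hBdiff e he, hBval e he]; ring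
  have hmain : L * TVon W B z
      = - ∑ e ∈ E \ B, h e * (z (oflip σ e).2 - z (oflip σ e).1) := by
    have := hsplit
    rw [key, hzero, hBsum] at this
    linarith
  rw [hmain]
  calc - ∑ e ∈ E \ B, h e * (z (oflip σ e).2 - z (oflip σ e).1)
      ≤ ∑ e ∈ E \ B, |h e * (z (oflip σ e).2 - z (oflip σ e).1)| := by
        exact le_trans (neg_le_abs _) (Finset.abs_sum_le_sum_abs _ _)
    _ ≤ TVon W (E \ B) z := by
        rw [TVon]
        refine Finset.sum_le_sum fun e he => ?_
        have heE : e ∈ E := (Finset.mem_sdiff.mp he).1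
        have heB : e ∉ B := (Finset.mem_sdiff.mp he).2
        rw [abs_mul, abs_of_nonneg (hpos e heE), habs e]
        exact mul_le_mul_of_nonneg_right (hcap e heE heB) (abs_nonneg _)
end

section
/- Under the network compatibility condition with parameters K, L > 0, for any graph signal z : V → ℝ one has L·‖z‖_{∂F} ≤ ‖z‖_{E∖∂F} + K·Σ_{i∈M} |z[i]|. -/
open Finset

/-- under the NCC with parameters `K, L > 0`, every graph signal
satisfies `L·‖z‖_B ≤ ‖z‖_{E∖B} + K·Σ_{i∈M}|z[i]|`. -/
theorem ncc_compatibility_inequality {V : Type*} [Fintype V] [DecidableEq V]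
    (E B : Finset (V × V)) (hB : B ⊆ E) (W : V × V → ℝ) (hW : ∀ e ∈ E, 0 < W e)
    (M : Finset V) (K L : ℝ) (hK : 0 < K) (hL : 0 < L)
    (hNCC : NCC E B W M K L)
    (z : V → ℝ) :
    L * TVon W B z ≤ TVon W (E \ B) z + K * ∑ i ∈ M, |z i| := by
  obtain ⟨σ, hσB, h, hpos, hbdry, hcap, hKb, hM0⟩ :=
    hNCC (fun e => decide (z e.2 ≤ z e.1))
  set g : V × V → ℝ := fun e => z (oflip σ e).2 - z (oflip σ e).1 with hg
  -- summation by parts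
  have key : ∑ i, z i * demandOf E σ h i = ∑ e ∈ E, h e * g e := by
    simp only [demandOf, mul_sub, Finset.mul_sum, Finset.sum_sub_distrib]
    rw [Finset.sum_comm, Finset.sum_comm (s := (Finset.univ : Finset V))]
    simp only [mul_ite, mul_zero, Finset.sum_ite_eq, Finset.mem_univ, if_true, hg]
    rw [← Finset.sum_sub_distrib]
    exact Finset.sum_congr rfl (fun e _ => by ring)
  have hgabs : ∀ e, |g e| = |z e.2 - z e.1| := by
    intro e; by_cases hs : σ e <;> simp [hg, oflip, hs, abs_sub_comm]
  have hgB : ∀ e ∈ B, g e = -|z e.2 - z e.1| := by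
    intro e he
    have hσ := hσB e he
    by_cases hle : z e.2 ≤ z e.1
    · have : σ e = true := by rw [hσ]; simp [hle]
      simp [hg, oflip, this, abs_of_nonpos (sub_nonpos.2 hle)]
    · have : σ e = false := by rw [hσ]; simp [hle]
      have hlt : z e.1 < z e.2 := lt_of_not_ge hle
      simp [hg, oflip, this, abs_of_pos (sub_pos.2 hlt)]
  have hsplit : ∑ e ∈ E \ B, h e * g e + ∑ e ∈ B, h e * g e = ∑ e ∈ E, h e * g e :=
    Finset.sum_sdiff hB
  have hBsum : ∑ e ∈ B, h e * g e = -(L * TVon W B z) := by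
    rw [TVon, Finset.mul_sum, ← Finset.sum_neg_distrib]
    exact Finset.sum_congr rfl (fun e he => by
      rw [hbdry e he, hgB e he]; ring)
  have hEB : ∑ e ∈ E \ B, h e * g e ≤ TVon W (E \ B) z := by
    rw [TVon]
    refine Finset.sum_le_sum (fun e he => ?_)
    have heE : e ∈ E := (Finset.mem_sdiff.1 he).1
    have heB : e ∉ B := (Finset.mem_sdiff.1 he).2
    calc h e * g e ≤ |h e * g e| := le_abs_self _
      _ = h e * |g e| := by rw [abs_mul, abs_of_nonneg (hpos e heE)]
      _ ≤ W e * |g e| := mul_le_mul_of_nonneg_right (hcap e heE heB) (abs_nonneg _)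
      _ = W e * |z e.2 - z e.1| := by rw [hgabs]
  have hdem : ∑ i, z i * demandOf E σ h i = ∑ i ∈ M, z i * demandOf E σ h i := by
    refine (Finset.sum_subset (Finset.subset_univ M) ?_).symm
    intro i _ hi; rw [hM0 i hi, mul_zero]
  have hdembnd : -(∑ i ∈ M, z i * demandOf E σ h i) ≤ K * ∑ i ∈ M, |z i| := by
    calc -(∑ i ∈ M, z i * demandOf E σ h i) ≤ |∑ i ∈ M, z i * demandOf E σ h i| :=
          neg_le_abs _
      _ ≤ ∑ i ∈ M, |z i * demandOf E σ h i| := Finset.abs_sum_le_sum_abs _ _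
      _ ≤ ∑ i ∈ M, |z i| * K := by
          refine Finset.sum_le_sum (fun i hi => ?_)
          rw [abs_mul]
          exact mul_le_mul_of_nonneg_left (hKb i hi) (abs_nonneg _)
      _ = K * ∑ i ∈ M, |z i| := by rw [← Finset.sum_mul, mul_comm]
  have : L * TVon W B z = ∑ e ∈ E \ B, h e * g e - ∑ i ∈ M, z i * demandOf E σ h i := by
    rw [← hdem, key, ← hsplit, hBsum]; ring
  rw [this]
  have := add_le_add hEB hdembnd
  linarith
end

section
/- (Exact recovery in the noiseless case) Let x be a clustered graph signal for partition F and suppose the samples are noiseless: y_i = x[i] for i ∈ M. If M and F satisfy the network compatibility condition with parameters K, L with L > 1, then with λ = 1/K, any minimizer x̂ of the network Lasso objective satisfies ‖x̂ − x‖_TV = 0; in particular if G is connected and x̂ agrees with x at some sampled node, then x̂ = x. -/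
open Finset

lemma oflip_abs {V : Type*} (σ : V × V → Bool) (u : V → ℝ) (e : V × V) :
    |u (oflip σ e).2 - u (oflip σ e).1| = |u e.2 - u e.1| := by
  unfold oflip; split
  · rfl
  · simp [abs_sub_comm]

lemma gauss_green {V : Type*} [Fintype V] [DecidableEq V] (E : Finset (V × V))
    (σ : V × V → Bool) (h : V × V → ℝ) (u : V → ℝ) :
    ∑ i : V, u i * demandOf E σ h i
      = ∑ e ∈ E, h e * (u (oflip σ e).2 - u (oflip σ e).1) := by
  unfold demandOf
  simp only [mul_sub, Finset.mul_sum, mul_ite, mul_zero]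
  rw [Finset.sum_sub_distrib, Finset.sum_comm, Finset.sum_comm (s := Finset.univ) (t := E),
    ← Finset.sum_sub_distrib]
  refine Finset.sum_congr rfl fun e he => ?_
  rw [Finset.sum_ite_eq, Finset.sum_ite_eq]
  simp [mul_comm, mul_sub]

/-- exact recovery in the noiseless case: the minimizer has zero
TV-distance to the clustered signal; if the graph is connected and the minimizer
agrees with the true signal at one sampled node, they coincide. -/
theorem network_lasso_exact_recovery {V ι : Type*} [Fintype V] [DecidableEq V] [DecidableEq ι]
    (E : Finset (V × V)) (W : V × V → ℝ) (hW : ∀ e ∈ E, 0 < W e)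
    (c : V → ι) (M : Finset V) (K L : ℝ) (hK : 0 < K) (hL : 1 < L)
    (hNCC : NCC E (E.filter fun e => c e.1 ≠ c e.2) W M K L)
    (a : ι → ℝ) (x : V → ℝ) (hx : ∀ i, x i = a (c i))
    (y : V → ℝ) (hy : ∀ i ∈ M, y i = x i)
    (xh : V → ℝ)
    (hmin : ∀ z : V → ℝ,
      (∑ i ∈ M, |xh i - y i|) + (1 / K) * TVon W E xh ≤
      (∑ i ∈ M, |z i - y i|) + (1 / K) * TVon W E z) :
    TVon W E (xh - x) = 0 ∧
    ((∀ i j : V, Reach E i j) → (∃ i ∈ M, xh i = x i) → xh = x) := by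
  classical
  set u : V → ℝ := xh - x with hu
  have hue : ∀ i, u i = xh i - x i := fun i => rfl
  set p : V × V → Prop := fun e => c e.1 ≠ c e.2 with hp
  set B : Finset (V × V) := E.filter p with hBdef
  set Eint : Finset (V × V) := E.filter (fun e => ¬ p e) with hEintdef
  -- orientation according to sign of u differences on boundary
  obtain ⟨σ, hσB, h, hpos, hLW, hcap, hdM, hd0⟩ :=
    hNCC (fun e => decide (u e.1 ≤ u e.2))
  -- x has zero difference across interior edges
  have hxint : ∀ e ∈ Eint, x e.2 - x e.1 = 0 := by
    intro e he
    rw [hEintdef, Finset.mem_filter] at he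
    have : c e.1 = c e.2 := not_not.mp he.2
    rw [hx, hx, this, sub_self]
  -- split of TVon over E
  have hsplit : ∀ z : V → ℝ, TVon W E z = TVon W B z + TVon W Eint z := by
    intro z
    rw [TVon, TVon, TVon, hBdef, hEintdef,
      Finset.sum_filter_add_sum_filter_not E p (fun e => W e * |z e.2 - z e.1|)]
  -- nonnegativity of TVon on subsets of E
  have hTVnn : ∀ S : Finset (V × V), S ⊆ E → ∀ z : V → ℝ, 0 ≤ TVon W S z := by
    intro S hS z
    refine Finset.sum_nonneg fun e he => mul_nonneg (le_of_lt (hW e (hS he))) (abs_nonneg _)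
  have hBsub : B ⊆ E := Finset.filter_subset _ _
  have hIsub : Eint ⊆ E := Finset.filter_subset _ _
  -- Gauss-Green bound: L * TV_B(u) - TV_int(u) ≤ K * ∑_M |u i|
  have key : L * TVon W B u - TVon W Eint u ≤ K * ∑ i ∈ M, |u i| := by
    have hGG := gauss_green E σ h u
    -- RHS of GG bounded below
    have hlow : L * TVon W B u - TVon W Eint u
        ≤ ∑ e ∈ E, h e * (u (oflip σ e).2 - u (oflip σ e).1) := by
      rw [← Finset.sum_filter_add_sum_filter_not E p
        (fun e => h e * (u (oflip σ e).2 - u (oflip σ e).1)), ← hBdef, ← hEintdef]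
      have h1 : ∑ e ∈ B, h e * (u (oflip σ e).2 - u (oflip σ e).1) = L * TVon W B u := by
        rw [TVon, Finset.mul_sum]
        refine Finset.sum_congr rfl fun e he => ?_
        have hσe : σ e = decide (u e.1 ≤ u e.2) := hσB e he
        have hhe : h e = L * W e := hLW e he
        have hdiff : u (oflip σ e).2 - u (oflip σ e).1 = |u e.2 - u e.1| := by
          rw [oflip, hσe]
          rcases le_or_gt (u e.1) (u e.2) with hle | hlt
          · simp [hle, abs_of_nonneg (sub_nonneg.mpr hle)]
          · simp [not_le.mpr hlt, abs_of_neg (sub_neg.mpr hlt)]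
        rw [hdiff, hhe]; ring
      have h2 : -(TVon W Eint u) ≤ ∑ e ∈ Eint, h e * (u (oflip σ e).2 - u (oflip σ e).1) := by
        rw [TVon, ← Finset.sum_neg_distrib]
        refine Finset.sum_le_sum fun e he => ?_
        have heE : e ∈ E := hIsub he
        have hcape : h e ≤ W e := hcap e heE (by
          intro hB
          rw [hBdef, Finset.mem_filter] at hB
          rw [hEintdef, Finset.mem_filter] at he
          exact he.2 hB.2)
        have hposes : 0 ≤ h e := hpos e heE
        have habs : |u (oflip σ e).2 - u (oflip σ e).1| = |u e.2 - u e.1| := oflip_abs σ u e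
        have h3 : -(h e * |u e.2 - u e.1|) ≤ h e * (u (oflip σ e).2 - u (oflip σ e).1) := by
          rw [← habs]
          nlinarith [neg_abs_le (u (oflip σ e).2 - u (oflip σ e).1),
            abs_nonneg (u (oflip σ e).2 - u (oflip σ e).1)]
        have h4 : -(W e * |u e.2 - u e.1|) ≤ -(h e * |u e.2 - u e.1|) := by
          nlinarith [abs_nonneg (u e.2 - u e.1)]
        linarith
      linarith [h1, h2]
    -- LHS of GG bounded above
    have hup : ∑ i : V, u i * demandOf E σ h i ≤ K * ∑ i ∈ M, |u i| := by
      have hMsum : ∑ i : V, u i * demandOf E σ h i = ∑ i ∈ M, u i * demandOf E σ h i := by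
        refine (Finset.sum_subset (Finset.subset_univ M) ?_).symm
        intro i _ hiM
        rw [hd0 i hiM, mul_zero]
      rw [hMsum, Finset.mul_sum]
      refine Finset.sum_le_sum fun i hi => ?_
      calc u i * demandOf E σ h i ≤ |u i * demandOf E σ h i| := le_abs_self _
        _ = |u i| * |demandOf E σ h i| := abs_mul _ _
        _ ≤ |u i| * K := mul_le_mul_of_nonneg_left (hdM i hi) (abs_nonneg _)
        _ = K * |u i| := mul_comm _ _
    linarith [hGG ▸ hlow, hup]
  -- minimality inequality with z = x
  have hmx := hmin x
  have hyx : ∑ i ∈ M, |x i - y i| = 0 := by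
    refine Finset.sum_eq_zero fun i hi => by rw [hy i hi, sub_self, abs_zero]
  have huy : ∑ i ∈ M, |xh i - y i| = ∑ i ∈ M, |u i| := by
    refine Finset.sum_congr rfl fun i hi => by rw [hy i hi, hue]
  rw [hyx, huy, zero_add] at hmx
  -- multiply by K
  have hmx' : K * (∑ i ∈ M, |u i|) + TVon W E xh ≤ TVon W E x := by
    have h1 : TVon W E xh = K * (1 / K * TVon W E xh) := by field_simp
    have h2 : TVon W E x = K * (1 / K * TVon W E x) := by field_simp
    rw [h1, h2, ← mul_add]
    exact mul_le_mul_of_nonneg_left hmx (le_of_lt hK)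
  -- TV_int(x) = 0
  have hTVintx : TVon W Eint x = 0 := by
    refine Finset.sum_eq_zero fun e he => by rw [hxint e he, abs_zero, mul_zero]
  -- TV_int(xh) = TV_int(u)
  have hTVintxh : TVon W Eint xh = TVon W Eint u := by
    refine Finset.sum_congr rfl fun e he => ?_
    have := hxint e he
    have : xh e.2 - xh e.1 = u e.2 - u e.1 := by rw [hue, hue]; linarith
    rw [this]
  -- TV_B(x) ≤ TV_B(xh) + TV_B(u)
  have htri : TVon W B x ≤ TVon W B xh + TVon W B u := by
    rw [TVon, TVon, TVon, ← Finset.sum_add_distrib]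
    refine Finset.sum_le_sum fun e he => ?_
    have hWe : 0 ≤ W e := le_of_lt (hW e (hBsub he))
    have : |x e.2 - x e.1| ≤ |xh e.2 - xh e.1| + |u e.2 - u e.1| := by
      rw [hue, hue]
      have hsub : x e.2 - x e.1
          = (xh e.2 - xh e.1) - ((xh e.2 - x e.2) - (xh e.1 - x e.1)) := by ring
      rw [hsub]
      exact abs_sub _ _
    nlinarith
  -- combine
  have hSnn : 0 ≤ ∑ i ∈ M, |u i| := Finset.sum_nonneg fun i _ => abs_nonneg _
  have hBnn : 0 ≤ TVon W B u := hTVnn B hBsub u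
  have hInn : 0 ≤ TVon W Eint u := hTVnn Eint hIsub u
  have hstar : K * (∑ i ∈ M, |u i|) + TVon W Eint u ≤ TVon W B u := by
    have e1 := hsplit xh
    have e2 := hsplit x
    linarith [hmx', hTVintx, hTVintxh, htri]
  have hB0 : TVon W B u = 0 := by nlinarith [key, hstar]
  have hI0 : TVon W Eint u = 0 := by nlinarith [hstar]
  have hTV0 : TVon W E u = 0 := by rw [hsplit u, hB0, hI0, add_zero]
  refine ⟨hTV0, ?_⟩
  -- edges: u constant across each edge
  have hedge : ∀ e ∈ E, u e.1 = u e.2 := by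
    intro e he
    have := (Finset.sum_eq_zero_iff_of_nonneg
      (fun e' (he' : e' ∈ E) => mul_nonneg (le_of_lt (hW e' he')) (abs_nonneg _))).mp hTV0 e he
    have hWe := hW e he
    have : |u e.2 - u e.1| = 0 := by
      rcases mul_eq_zero.mp this with h' | h'
      · exact absurd h' (ne_of_gt hWe)
      · exact h'
    linarith [abs_eq_zero.mp this, (abs_eq_zero.mp this)]
  intro hconn ⟨i0, hi0M, hi0⟩
  have hu0 : u i0 = 0 := by rw [hue, hi0, sub_self]
  have hconst : ∀ a b : V, Reach E a b → u a = u b := by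
    intro a b hab
    induction hab with
    | refl => rfl
    | tail _ hbc ih =>
      rcases hbc with h' | h'
      · exact ih.trans (hedge _ h')
      · exact ih.trans (hedge _ h').symm
  funext j
  have : u j = 0 := (hconst i0 j (hconn i0 j)).symm.trans hu0
  have := hue j ▸ this
  linarith [this]
end
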